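/- The generating function H(x) = z(x)^a/a - z(x)^{2a}/2, where z = x e^{z^a}, satisfies the differential equation (x/a) H'(x) - H(x) = (x^2/2) H'(x)^2. -/

import Mathlib

/-!
Put `w = z^a`. Differentiating `z = x exp(w)` gives `x z' = z (1 + x w')`, hence the
relation `x w' = a w (1 + x w')`. For `H = w/a - w²/2` this says exactly `x H' = w`, and then
`(x/a) H' - H = w²/2 = (x H')²/2`.
-/

open PowerSeries

/-- `expOf f = exp ∘ f` for a power series `f` with zero constant term. -/
noncomputable def expOf (f : PowerSeries ℚ) : PowerSeries ℚ :=
  PowerSeries.mk fun n =>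
    ∑ m ∈ Finset.range (n + 1), (PowerSeries.coeff n (f ^ m)) / Nat.factorial m

/-- Formal derivative `d/dx` of a power series. -/
noncomputable def pderiv (f : PowerSeries ℚ) : PowerSeries ℚ :=
  PowerSeries.mk fun n => ((n : ℚ) + 1) * PowerSeries.coeff (n + 1) f

theorem pderiv_eq_derivative (f : ℚ⟦X⟧) : pderiv f = d⁄dX ℚ f := by
  ext n
  rw [pderiv, coeff_mk, coeff_derivative, mul_comm]

theorem coeff_pow_eq_zero_of_lt {R : Type*} [CommSemiring R] {f : R⟦X⟧}
    (hf : constantCoeff f = 0) {n m : ℕ} (h : n < m) : coeff n (f ^ m) = 0 :=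
  coeff_of_lt_order n <|
    (Nat.cast_lt.mpr h).trans_le (le_order_pow_of_constantCoeff_eq_zero m hf)

theorem expOf_eq_subst_exp {f : ℚ⟦X⟧} (hf : constantCoeff f = 0) :
    expOf f = (exp ℚ).subst f := by
  ext n
  rw [expOf, coeff_mk, coeff_subst' (HasSubst.of_constantCoeff_zero' hf),
    finsum_eq_sum_of_support_subset _ (s := Finset.range (n + 1)) ?_]
  · refine Finset.sum_congr rfl fun m _ => ?_
    rw [coeff_exp, smul_eq_mul]
    simp [div_eq_inv_mul]
  · intro m hm
    simp only [Function.mem_support, Finset.coe_range, Set.mem_Iio] at hm ⊢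
    by_contra! h
    exact hm (by rw [coeff_pow_eq_zero_of_lt hf (Nat.lt_of_succ_le h), smul_zero])

theorem derivative_expOf {f : ℚ⟦X⟧} (hf : constantCoeff f = 0) :
    d⁄dX ℚ (expOf f) = d⁄dX ℚ f * expOf f := by
  rw [expOf_eq_subst_exp hf, derivative_subst (HasSubst.of_constantCoeff_zero' hf),
    derivative_exp, mul_comm]

theorem derivative_C_mul {R : Type*} [CommRing R] (c : R) (f : R⟦X⟧) :
    d⁄dX R (C c * f) = C c * d⁄dX R f := by
  rw [← smul_eq_C_mul, ← smul_eq_C_mul, Derivation.map_smul]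

theorem X_mul_derivative_of_eq_X_mul_expOf {w z : ℚ⟦X⟧} (hw : constantCoeff w = 0)
    (hz : z = X * expOf w) : X * d⁄dX ℚ z = z + z * (X * d⁄dX ℚ w) := by
  have hdz : d⁄dX ℚ z = expOf w + X * (d⁄dX ℚ w * expOf w) := by
    rw [hz, Derivation.leibniz, derivative_X, derivative_expOf hw, smul_eq_mul, smul_eq_mul,
      mul_one, add_comm]
  rw [hdz, hz]
  ring

theorem X_mul_derivative_pow_of_eq_X_mul_expOf {a : ℕ} (ha : a ≠ 0) {z : ℚ⟦X⟧}
    (h0 : constantCoeff z = 0) (hz : z = X * expOf (z ^ a)) :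
    X * d⁄dX ℚ (z ^ a) = (a : ℚ⟦X⟧) * z ^ a * (1 + X * d⁄dX ℚ (z ^ a)) := by
  have hw : constantCoeff (z ^ a) = 0 := by rw [map_pow, h0, zero_pow ha]
  have hzz : z ^ (a - 1) * z = z ^ a := pow_sub_one_mul ha z
  have hdz := X_mul_derivative_of_eq_X_mul_expOf hw hz
  rw [Derivation.leibniz_pow, smul_eq_mul, nsmul_eq_mul] at hdz ⊢
  linear_combination (a * z ^ (a - 1)) * hdz + (a * (1 + a * X * z ^ (a - 1) * d⁄dX ℚ z)) * hzz

theorem X_mul_derivative_div_sub_half_sq {a : ℕ} (ha : a ≠ 0) {w : ℚ⟦X⟧}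
    (hw : X * d⁄dX ℚ w = (a : ℚ⟦X⟧) * w * (1 + X * d⁄dX ℚ w)) :
    X * d⁄dX ℚ (C (1 / (a : ℚ)) * w - C (1 / 2 : ℚ) * w ^ 2) = w := by
  have hinv : C (1 / (a : ℚ)) * a = 1 := by
    rw [← map_natCast C, ← map_mul, one_div_mul_cancel (Nat.cast_ne_zero.mpr ha), map_one]
  have hhalf : C (1 / 2 : ℚ) * 2 = 1 := by
    rw [← map_ofNat C, ← map_mul]
    norm_num
  rw [map_sub, derivative_C_mul, derivative_C_mul, Derivation.leibniz_pow, smul_eq_mul,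
    nsmul_eq_mul]
  linear_combination C (1 / (a : ℚ)) * hw + (w * (1 + X * d⁄dX ℚ w)) * hinv
    - (w * X * d⁄dX ℚ w) * hhalf

/-- With `z` the formal power series solution of `z = x exp(z^a)`, `z(0)=0`, the
generating function `H = z^a/a - z^{2a}/2` satisfies
`(x/a) H' - H = (x²/2) (H')²`. -/
theorem H01_differential_equation (a : ℕ) (ha : 0 < a)
    (z : PowerSeries ℚ) (h0 : PowerSeries.constantCoeff z = 0)
    (hz : z = PowerSeries.X * expOf (z ^ a)) :
    PowerSeries.C (1 / (a : ℚ)) * PowerSeries.X *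
        pderiv (PowerSeries.C (1 / (a : ℚ)) * z ^ a - PowerSeries.C (1 / 2 : ℚ) * z ^ (2 * a))
      - (PowerSeries.C (1 / (a : ℚ)) * z ^ a - PowerSeries.C (1 / 2 : ℚ) * z ^ (2 * a))
      = PowerSeries.C (1 / 2 : ℚ) * PowerSeries.X ^ 2 *
          (pderiv (PowerSeries.C (1 / (a : ℚ)) * z ^ a
            - PowerSeries.C (1 / 2 : ℚ) * z ^ (2 * a))) ^ 2 := by
  have hxH : X * d⁄dX ℚ (C (1 / (a : ℚ)) * z ^ a - C (1 / 2 : ℚ) * (z ^ a) ^ 2) = z ^ a :=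
    X_mul_derivative_div_sub_half_sq ha.ne'
      (X_mul_derivative_pow_of_eq_X_mul_expOf ha.ne' h0 hz)
  rw [pderiv_eq_derivative, pow_mul']
  linear_combination
    (C (1 / (a : ℚ)) - C (1 / 2 : ℚ) * (X * d⁄dX ℚ (C (1 / (a : ℚ)) * z ^ a
      - C (1 / 2 : ℚ) * (z ^ a) ^ 2) + z ^ a)) * hxH
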